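/- Given data for the Lifting Problem, the map (k''₋, U'k'₊) ↦ (U''*k''₋, k'₊) is isometric with respect to the semi-inner product ⟨(a,b),(c,d)⟩ := ⟨a,c⟩ + ⟨Xb, c⟩ + ⟨a, Xd⟩ + ⟨b,d⟩ on K''₋ × K'₊: for all k''₋, l''₋ ∈ K''₋ and k'₊, l'₊ ∈ K'₊, ⟨k''₋, l''₋⟩ + ⟨X(U'k'₊), l''₋⟩ + ⟨k''₋, X(U'l'₊)⟩ + ⟨U'k'₊, U'l'₊⟩ = ⟨U''*k''₋, U''*l''₋⟩ + ⟨Xk'₊, U''*l''₋⟩ + ⟨U''*k''₋, Xl'₊⟩ + ⟨k'₊, l'₊⟩. (This is the statement that the map V : (k''₋, U'k'₊) ↦ (U''*k''₋, k'₊) constructed from the Lifting data is a well-defined isometry of the corresponding subspaces of the coupling Hilbert space.) -/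

import Mathlib

open ContinuousLinearMap

section ProjectedIntertwining

variable {𝕜 F : Type*} [RCLike 𝕜]
  [NormedAddCommGroup F] [InnerProductSpace 𝕜 F] [CompleteSpace F]
  (T : Submodule 𝕜 F) [T.HasOrthogonalProjection] (B : F →L[𝕜] F)

theorem inner_orthogonalProjectionOnto_map_eq_inner_adjoint (v : F) (l : T) :
    inner 𝕜 ((T.orthogonalProjectionOnto (B v) : T) : F) (l : F) = inner 𝕜 v (adjoint B l) := by
  rw [← Submodule.coe_inner, Submodule.inner_orthogonalProjectionOnto_eq_of_mem_right,
    adjoint_inner_right]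

theorem inner_adjoint_eq_inner_orthogonalProjectionOnto_map (v : F) (l : T) :
    inner 𝕜 (l : F) ((T.orthogonalProjectionOnto (B v) : T) : F) = inner 𝕜 (adjoint B l) v := by
  rw [← inner_conj_symm, inner_orthogonalProjectionOnto_map_eq_inner_adjoint, inner_conj_symm]

end ProjectedIntertwining

theorem stmt_9 {K' K'' : Type*}
    [NormedAddCommGroup K'] [InnerProductSpace ℂ K'] [CompleteSpace K']
    [NormedAddCommGroup K''] [InnerProductSpace ℂ K''] [CompleteSpace K'']
    (U' : K' →L[ℂ] K') (hU' : U' ∈ unitary (K' →L[ℂ] K'))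
    (U'' : K'' →L[ℂ] K'') (hU'' : U'' ∈ unitary (K'' →L[ℂ] K''))
    (K'p : Submodule ℂ K') (K''m : Submodule ℂ K'')
    [CompleteSpace K''m]
    (hinv' : ∀ x ∈ K'p, U' x ∈ K'p)
    (X : K'p →L[ℂ] K''m)
    (hXint : ∀ k : K'p,
      X ⟨U' (k : K'), hinv' (k : K') k.2⟩ = Submodule.orthogonalProjectionOnto K''m (U'' (X k : K''))) :
    ∀ (km lm : K''m) (kp lp : K'p),
      (inner ℂ (km : K'') (lm : K'') : ℂ)
        + inner ℂ ((X ⟨U' (kp : K'), hinv' (kp : K') kp.2⟩ : K''m) : K'') (lm : K'')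
        + inner ℂ (km : K'') ((X ⟨U' (lp : K'), hinv' (lp : K') lp.2⟩ : K''m) : K'')
        + inner ℂ (U' (kp : K')) (U' (lp : K'))
      = (inner ℂ (adjoint U'' (km : K'')) (adjoint U'' (lm : K'')) : ℂ)
        + inner ℂ ((X kp : K'')) (adjoint U'' (lm : K''))
        + inner ℂ (adjoint U'' (km : K'')) ((X lp : K''))
        + inner ℂ (kp : K') (lp : K') := by
  intro km lm kp lp
  have hU''adj : adjoint U'' ∈ unitary (K'' →L[ℂ] K'') := by
    rw [← star_eq_adjoint]
    exact Unitary.star_mem hU''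
  rw [hXint kp, hXint lp, inner_orthogonalProjectionOnto_map_eq_inner_adjoint,
    inner_adjoint_eq_inner_orthogonalProjectionOnto_map, inner_map_map_of_mem_unitary hU',
    inner_map_map_of_mem_unitary hU''adj]
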